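/- Let k ≥ 1, let x_1,…,x_k be positive integers and y_1,…,y_k be nonnegative integers satisfying x_i > y_i for all 1 ≤ i ≤ k and y_i ≥ x_{i+1} for all 1 ≤ i ≤ k−1, and set n = Σ_{i=1}^k (x_i + y_i). Define the rational numbers dN4 = 4n(4n−1)/2 − 2n, dB = 4n(4n−1)/2 − ( (1/2)·Σ_{i=1}^k ((2x_i)² + (2x_i−1)² + (2y_i+1)² + (2y_i)²) − k ), dN2 = 2n(2n−1)/2 − n, and dP = 2n(2n−1)/2 − ( (1/2)·Σ_{i=1}^k ((2x_i)² + (2y_i)²) − Σ_{i=1}^k (x_i − y_i) ). Then dN4 − dB = 2·(dN2 − dP). -/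
import Mathlib


/-- The key dimension identity from Appendix B: for a Brega parameter
`(x₁,…,x_k; y₁,…,y_k)` with `x_i > y_i` and `y_i ≥ x_{i+1}`, setting
`n = Σ (x_i + y_i)`, the dimensions of the nilpotent cones of `so(4n)` and
`so(2n)` and of the orbits `𝓑` and `𝒫` satisfy
`dN4 − dB = 2 (dN2 − dP)`. -/
theorem brega_dimension_identity (k : ℕ) (hk : 1 ≤ k) (x y : Fin k → ℕ)
    (hx : ∀ i, 0 < x i) (hxy : ∀ i, y i < x i)
    (hchain : ∀ i : Fin k, (h : i.val + 1 < k) → x ⟨i.val + 1, h⟩ ≤ y i)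
    (n : ℕ) (hn : n = ∑ i, (x i + y i))
    (dN4 dB dN2 dP : ℚ)
    (hdN4 : dN4 = (4 * n : ℚ) * (4 * n - 1) / 2 - 2 * n)
    (hdB : dB = (4 * n : ℚ) * (4 * n - 1) / 2 -
      ((1 / 2 : ℚ) * ∑ i, ((2 * (x i : ℚ)) ^ 2 + (2 * (x i : ℚ) - 1) ^ 2
        + (2 * (y i : ℚ) + 1) ^ 2 + (2 * (y i : ℚ)) ^ 2) - k))
    (hdN2 : dN2 = (2 * n : ℚ) * (2 * n - 1) / 2 - n)
    (hdP : dP = (2 * n : ℚ) * (2 * n - 1) / 2 -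
      ((1 / 2 : ℚ) * ∑ i, ((2 * (x i : ℚ)) ^ 2 + (2 * (y i : ℚ)) ^ 2)
        - ∑ i, ((x i : ℚ) - (y i : ℚ)))) :
    dN4 - dB = 2 * (dN2 - dP) := by
  subst hdN4 hdB hdN2 hdP
  have hnQ : (n : ℚ) = ∑ i, ((x i : ℚ) + (y i : ℚ)) := by
    rw [hn]; push_cast; rfl
  have e1 : ∑ i, ((2 * (x i : ℚ)) ^ 2 + (2 * (x i : ℚ) - 1) ^ 2
        + (2 * (y i : ℚ) + 1) ^ 2 + (2 * (y i : ℚ)) ^ 2)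
      = 2 * ∑ i, ((2 * (x i : ℚ)) ^ 2 + (2 * (y i : ℚ)) ^ 2)
        - 4 * ∑ i, ((x i : ℚ) - (y i : ℚ)) + 2 * k := by
    rw [Finset.mul_sum, Finset.mul_sum, ← Finset.sum_sub_distrib]
    have : (2 * (k : ℚ)) = ∑ _i : Fin k, (2 : ℚ) := by
      simp [mul_comm]
    rw [this, ← Finset.sum_add_distrib]
    exact Finset.sum_congr rfl fun i _ => by ring
  have e2 : ∑ i, ((2 * (x i : ℚ)) ^ 2 + (2 * (y i : ℚ)) ^ 2)
      = 4 * ∑ i, (x i : ℚ) ^ 2 + 4 * ∑ i, (y i : ℚ) ^ 2 := by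
    rw [Finset.mul_sum, Finset.mul_sum, ← Finset.sum_add_distrib]
    exact Finset.sum_congr rfl fun i _ => by ring
  rw [e1, e2, hnQ, Finset.sum_add_distrib, Finset.sum_sub_distrib]
  ring
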